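/- arXiv:1507.05486 — 3 statements merged into one kernel-verified Lean document; each statement's English description precedes it below -/
import Mathlib

section
/- Let (S, T⁺, T⁻) be an abstract spectrum, T = sup{T⁺, T⁻}, and let S₁ be a nonempty subset of S with the subspace topologies T₁⁺ = {U ∩ S₁ : U ∈ T⁺} and T₁⁻ = {U ∩ S₁ : U ∈ T⁻}. Then (S₁, T₁⁺, T₁⁻) is an abstract spectrum if and only if S₁ is a closed subset of the topological space (S, T). -/
/-!
Mathlib orders topologies by reverse inclusion, so the paper's `sup{T⁺, T⁻}` is `tp ⊓ tm`, the
patch topology. It is compact by Alexander's subbasis theorem, each of the two compactness axioms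
reducing half of a cover by `T⁺`- and `T⁻`-open sets to a finite one, and Hausdorff, because a
`T₀` separation by an `L⁺`-set `V` becomes a separation by the patch-open sets `V` and `Vᶜ`.
So if `S₁` is a spectrum, it is patch-compact, hence patch-closed. Conversely bases and `T₀` pass
to every subspace, and a closed subset of a patch-closed `S₁` is patch-compact, hence compact in
either coarser topology.
-/

/-- `B` is a base for the topology `t`: every element of `B` is open and every
open set is a union of elements of `B`. -/
def IsBaseFor {S : Type*} (t : TopologicalSpace S) (B : Set (Set S)) : Prop :=
  (∀ V ∈ B, t.IsOpen V) ∧ ∀ U : Set S, t.IsOpen U → ∀ x ∈ U, ∃ V ∈ B, x ∈ V ∧ V ⊆ U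

/-- The family `L⁺ = {U ∈ T⁺ : S∖U ∈ T⁻}` (for `specL tp tm`); `specL tm tp` is `L⁻`. -/
def specL {S : Type*} (tp tm : TopologicalSpace S) : Set (Set S) :=
  {U | tp.IsOpen U ∧ tm.IsOpen Uᶜ}

/-- `(S, T⁺, T⁻)` is an abstract spectrum. -/
structure IsAbstractSpectrum {S : Type*} (tp tm : TopologicalSpace S) : Prop where
  nonempty : Nonempty S
  base_plus : IsBaseFor tp (specL tp tm)
  base_minus : IsBaseFor tm (specL tm tp)
  compact_of_plus_closed : ∀ F : Set S, @IsClosed S tp F → @IsCompact S tm F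
  compact_of_minus_closed : ∀ F : Set S, @IsClosed S tm F → @IsCompact S tp F
  t0 : @T0Space S tp ∨ @T0Space S tm

open Set TopologicalSpace Topology

section PatchTopology

variable {X : Type*} {t₁ t₂ : TopologicalSpace X}

theorem IsCompact.of_le_topology (hle : t₁ ≤ t₂) {s : Set X} (hs : @IsCompact X t₁ s) :
    @IsCompact X t₂ s := by
  simpa using @IsCompact.image X X t₁ t₂ s id hs (continuous_id_of_le hle)

theorem compactSpace_inf_of_isClosed_isCompact
    (h₁ : ∀ F, IsClosed[t₁] F → @IsCompact X t₂ F) (h₂ : ∀ F, IsClosed[t₂] F → @IsCompact X t₁ F) :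
    @CompactSpace X (t₁ ⊓ t₂) := by
  refine @compactSpace_generateFrom X (t₁ ⊓ t₂) _ (generateFrom_union_isOpen t₁ t₂).symm
    fun P hP hcover => ?_
  set P₁ := P ∩ {s | IsOpen[t₁] s}
  set P₂ := P ∩ {s | IsOpen[t₂] s}
  -- The `t₁`-closed set left uncovered by `P₁` is `t₂`-compact, so finitely many of `P₂` cover it;
  -- what those leave uncovered is `t₂`-closed, hence `t₁`-compact and covered by `P₁`.
  obtain ⟨Q₂, hQ₂P, hQ₂, hcover₂⟩ : ∃ Q₂ ⊆ P₂, Q₂.Finite ∧ (⋃₀ P₁)ᶜ ⊆ ⋃₀ Q₂ := by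
    have hcpt : @IsCompact X t₂ (⋃₀ P₁)ᶜ :=
      h₁ _ (@IsOpen.isClosed_compl X t₁ _ (@isOpen_sUnion X t₁ _ fun s hs => hs.2))
    have hsub : (⋃₀ P₁)ᶜ ⊆ ⋃₀ P₂ := by
      intro x hx
      obtain ⟨s, hsP, hxs⟩ := mem_sUnion.1 (hcover.symm ▸ mem_univ x : x ∈ ⋃₀ P)
      rcases hP hsP with hs | hs
      · exact (hx (mem_sUnion_of_mem hxs ⟨hsP, hs⟩)).elim
      · exact mem_sUnion_of_mem hxs ⟨hsP, hs⟩
    simpa [sUnion_eq_biUnion] using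
      @IsCompact.elim_finite_subcover_image X _ t₂ _ P₂ id hcpt (fun s hs => hs.2)
        (by simpa [sUnion_eq_biUnion] using hsub)
  obtain ⟨Q₁, hQ₁P, hQ₁, hcover₁⟩ : ∃ Q₁ ⊆ P₁, Q₁.Finite ∧ (⋃₀ Q₂)ᶜ ⊆ ⋃₀ Q₁ := by
    have hcpt : @IsCompact X t₁ (⋃₀ Q₂)ᶜ :=
      h₂ _ (@IsOpen.isClosed_compl X t₂ _ (@isOpen_sUnion X t₂ _ fun s hs => (hQ₂P hs).2))
    have hsub : (⋃₀ Q₂)ᶜ ⊆ ⋃₀ P₁ := fun x hx => by_contra fun h => hx (hcover₂ h)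
    simpa [sUnion_eq_biUnion] using
      @IsCompact.elim_finite_subcover_image X _ t₁ _ P₁ id hcpt (fun s hs => hs.2)
        (by simpa [sUnion_eq_biUnion] using hsub)
  refine ⟨Q₁ ∪ Q₂, union_subset (hQ₁P.trans inter_subset_left) (hQ₂P.trans inter_subset_left),
    hQ₁.union hQ₂, eq_univ_of_forall fun x => ?_⟩
  by_cases hx : x ∈ ⋃₀ Q₂
  · exact sUnion_mono subset_union_right hx
  · exact sUnion_mono subset_union_left (hcover₁ hx)

theorem t2Space_inf_of_isBaseFor_specL (ht₁ : @T0Space X t₁) (hb : IsBaseFor t₁ (specL t₁ t₂)) :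
    @T2Space X (t₁ ⊓ t₂) := by
  refine @T2Space.mk X (t₁ ⊓ t₂) fun x y hxy => ?_
  obtain ⟨U, hU, hxor⟩ := (@t0Space_iff_exists_isOpen_xor_mem X t₁).1 ht₁ hxy
  have separate : ∀ a b, a ∈ U → b ∉ U →
      ∃ V, IsOpen[t₁ ⊓ t₂] V ∧ IsOpen[t₁ ⊓ t₂] Vᶜ ∧ a ∈ V ∧ b ∉ V := by
    intro a b ha hbU
    obtain ⟨V, ⟨hV, hVc⟩, haV, hVU⟩ := hb.2 U hU a ha
    exact ⟨V, IsOpen.mono hV inf_le_left, IsOpen.mono hVc inf_le_right, haV,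
      fun hbV => hbU (hVU hbV)⟩
  rcases hxor with ⟨hx, hy⟩ | ⟨hy, hx⟩
  · obtain ⟨V, hV, hVc, hxV, hyV⟩ := separate x y hx hy
    exact ⟨V, Vᶜ, hV, hVc, hxV, hyV, disjoint_compl_right⟩
  · obtain ⟨V, hV, hVc, hyV, hxV⟩ := separate y x hy hx
    exact ⟨Vᶜ, V, hVc, hV, hxV, hyV, disjoint_compl_left⟩

theorem IsBaseFor.specL_induced {Y : Type*} (f : Y → X) (hb : IsBaseFor t₁ (specL t₁ t₂)) :
    IsBaseFor (t₁.induced f) (specL (t₁.induced f) (t₂.induced f)) := by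
  refine ⟨fun V hV => hV.1, fun W hW y hy => ?_⟩
  obtain ⟨U, hU, rfl⟩ := hW
  obtain ⟨V, hV, hxV, hVU⟩ := hb.2 U hU (f y) hy
  exact ⟨f ⁻¹' V, ⟨⟨V, hV.1, rfl⟩, ⟨Vᶜ, hV.2, rfl⟩⟩, hxV, preimage_mono hVU⟩

theorem isCompact_induced_of_isClosed_induced (hc : @CompactSpace X (t₁ ⊓ t₂)) {s : Set X}
    (hs : IsClosed[t₁ ⊓ t₂] s) {F : Set s} (hF : IsClosed[t₁.induced (↑)] F) :
    @IsCompact s (t₂.induced (↑)) F := by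
  obtain ⟨C, hC, rfl⟩ := (@isClosed_induced_iff s X t₁ F Subtype.val).1 hF
  have hCs : @IsCompact X (t₁ ⊓ t₂) (C ∩ s) :=
    @IsClosed.isCompact X (t₁ ⊓ t₂) _ hc
      (@IsClosed.inter X _ _ (t₁ ⊓ t₂) (hC.mono inf_le_left) hs)
  refine (@IsInducing.isCompact_iff s X (t₂.induced (↑)) t₂ _ _ ⟨rfl⟩).2 ?_
  rw [image_preimage_eq_inter_range, Subtype.range_coe]
  exact IsCompact.of_le_topology (inf_le_right : t₁ ⊓ t₂ ≤ t₂) hCs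

end PatchTopology

namespace IsAbstractSpectrum

variable {S : Type*} {tp tm : TopologicalSpace S}

theorem symm (h : IsAbstractSpectrum tp tm) : IsAbstractSpectrum tm tp :=
  ⟨h.nonempty, h.base_minus, h.base_plus, h.compact_of_minus_closed,
    h.compact_of_plus_closed, h.t0.symm⟩

theorem compactSpace_inf (h : IsAbstractSpectrum tp tm) : @CompactSpace S (tp ⊓ tm) :=
  compactSpace_inf_of_isClosed_isCompact h.compact_of_plus_closed h.compact_of_minus_closed

theorem t2Space_inf (h : IsAbstractSpectrum tp tm) : @T2Space S (tp ⊓ tm) := by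
  rcases h.t0 with ht | ht
  · exact t2Space_inf_of_isBaseFor_specL ht h.base_plus
  · exact inf_comm tp tm ▸ t2Space_inf_of_isBaseFor_specL ht h.base_minus

theorem isClosed_inf_of_induced {S₁ : Set S}
    (h₁ : IsAbstractSpectrum (tp.induced ((↑) : S₁ → S)) (tm.induced (↑)))
    (h : IsAbstractSpectrum tp tm) :
    IsClosed[tp ⊓ tm] S₁ := by
  have hc : @CompactSpace S₁ ((tp ⊓ tm).induced (↑)) := induced_inf ▸ h₁.compactSpace_inf
  exact @IsCompact.isClosed S (tp ⊓ tm) h.t2Space_inf S₁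
    ((@isCompact_iff_compactSpace S (tp ⊓ tm) S₁).2 hc)

theorem induced_of_isClosed_inf (h : IsAbstractSpectrum tp tm) {S₁ : Set S} (hne : S₁.Nonempty)
    (hS₁ : IsClosed[tp ⊓ tm] S₁) :
    IsAbstractSpectrum (tp.induced ((↑) : S₁ → S)) (tm.induced (↑)) where
  nonempty := hne.to_subtype
  base_plus := h.base_plus.specL_induced _
  base_minus := h.base_minus.specL_induced _
  compact_of_plus_closed _ := isCompact_induced_of_isClosed_induced h.compactSpace_inf hS₁
  compact_of_minus_closed _ := isCompact_induced_of_isClosed_induced h.symm.compactSpace_inf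
    (inf_comm tp tm ▸ hS₁)
  t0 := h.t0.imp (fun ht => @Subtype.t0Space S tp ht _) fun ht => @Subtype.t0Space S tm ht _

end IsAbstractSpectrum

/-- Let `(S, T⁺, T⁻)` be an abstract spectrum, `T = sup{T⁺, T⁻}`, and `S₁` a nonempty
subset of `S` with the subspace topologies `T₁⁺`, `T₁⁻`. Then `(S₁, T₁⁺, T₁⁻)` is an
abstract spectrum iff `S₁` is closed in `(S, T)`. -/
theorem stmt6 {S : Type*} (tp tm : TopologicalSpace S)
    (h : IsAbstractSpectrum tp tm) (S₁ : Set S) (hS₁ : S₁.Nonempty) :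
    IsAbstractSpectrum
        (TopologicalSpace.induced (Subtype.val : S₁ → S) tp)
        (TopologicalSpace.induced (Subtype.val : S₁ → S) tm) ↔
      @IsClosed S (TopologicalSpace.generateFrom {U : Set S | tp.IsOpen U ∨ tm.IsOpen U}) S₁ := by
  rw [show generateFrom {U : Set S | tp.IsOpen U ∨ tm.IsOpen U} = tp ⊓ tm from
    generateFrom_union_isOpen tp tm]
  exact ⟨fun h₁ => h₁.isClosed_inf_of_induced h, h.induced_of_isClosed_inf hS₁⟩
end

section
/- Let (S, T⁺, T⁻) be an abstract spectrum, ordered by the specialization order a ≤ b iff a lies in the T⁻-closure of {b}, and let Max(S) and Min(S) be the sets of maximal and minimal elements of (S, ≤). Then: (a) Max(S) with the subspace topology from T⁺, and Min(S) with the subspace topology from T⁻, are compact T₁-spaces; (b) Min(S) with the subspace topology from T⁺, and Max(S) with the subspace topology from T⁻, are Hausdorff spaces; (c) Min(S) is dense in (S, T⁺) and Max(S) is dense in (S, T⁻). -/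
/-- The specialization order of an abstract spectrum: `a ≤ b` iff `a` lies in the
`T⁻`-closure of `{b}`. -/
def specLE {S : Type*} (tm : TopologicalSpace S) (a b : S) : Prop :=
  a ∈ @closure S tm {b}

/-- The set of maximal elements of the specialization order. -/
def MaxS {S : Type*} (tm : TopologicalSpace S) : Set S :=
  {m | ∀ x : S, specLE tm m x → x = m}

/-- The set of minimal elements of the specialization order. -/
def MinS {S : Type*} (tm : TopologicalSpace S) : Set S :=
  {m | ∀ x : S, specLE tm x m → x = m}

section aux
open Set
variable {S : Type*} {tp tm : TopologicalSpace S}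

lemma spec_symm (h : IsAbstractSpectrum tp tm) : IsAbstractSpectrum tm tp :=
  ⟨h.nonempty, h.base_minus, h.base_plus, h.compact_of_minus_closed,
    h.compact_of_plus_closed, h.t0.symm⟩

lemma mem_cl {S : Type*} {t : TopologicalSpace S} {s : Set S} {a : S} :
    a ∈ @closure S t s ↔ ∀ o, t.IsOpen o → a ∈ o → (o ∩ s).Nonempty := by
  letI := t; exact mem_closure_iff

lemma flip_aux (h : IsAbstractSpectrum tp tm) {a b : S}
    (ha : a ∈ @closure S tm {b}) : b ∈ @closure S tp {a} := by
  rw [mem_cl]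
  intro o ho hb
  obtain ⟨V, hV, hbV, hVo⟩ := h.base_plus.2 o ho b hb
  by_cases haV : a ∈ V
  · exact ⟨a, hVo haV, rfl⟩
  · obtain ⟨y, hy1, hy2⟩ := mem_cl.1 ha Vᶜ hV.2 haV
    rw [mem_singleton_iff] at hy2
    subst hy2
    exact absurd hbV hy1

lemma spec_flip (h : IsAbstractSpectrum tp tm) (a b : S) :
    a ∈ @closure S tm {b} ↔ b ∈ @closure S tp {a} :=
  ⟨flip_aux h, flip_aux (spec_symm h)⟩

lemma specLE_refl (tm : TopologicalSpace S) (a : S) : specLE tm a a :=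
  subset_closure rfl

lemma specLE_trans {a b c : S} (h1 : specLE tm a b) (h2 : specLE tm b c) :
    specLE tm a c := by
  letI := tm
  have : closure {b} ⊆ closure {c} :=
    closure_minimal (singleton_subset_iff.2 h2) isClosed_closure
  exact this h1

lemma t0_minus (h : IsAbstractSpectrum tp tm) : @T0Space S tm := by
  rcases h.t0 with h0 | h0
  · letI := tm
    rw [t0Space_iff_inseparable]
    intro x y hxy
    rw [inseparable_iff_mem_closure] at hxy
    have hins : @Inseparable S tp x y := by
      letI := tp
      rw [inseparable_iff_mem_closure]
      exact ⟨(spec_flip h y x).1 hxy.2, (spec_flip h x y).1 hxy.1⟩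
    letI := tp
    exact hins.eq
  · exact h0

lemma specLE_antisymm (h : IsAbstractSpectrum tp tm) {a b : S}
    (h1 : specLE tm a b) (h2 : specLE tm b a) : a = b := by
  letI := tm
  haveI := t0_minus h
  exact ((inseparable_iff_mem_closure).2 ⟨h1, h2⟩).eq

lemma univ_compact_m (h : IsAbstractSpectrum tp tm) : @IsCompact S tm univ :=
  h.compact_of_plus_closed univ (by letI := tp; exact isClosed_univ)

lemma exists_min (h : IsAbstractSpectrum tp tm) (x : S) :
    ∃ m, m ∈ MinS tm ∧ specLE tm m x := by
  letI P : Preorder S :=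
    { le := fun a b => specLE tm b a
      le_refl := fun a => specLE_refl tm a
      le_trans := fun a b c h1 h2 => specLE_trans h2 h1 }
  have ih : ∀ c ⊆ {y | specLE tm y x}, IsChain (· ≤ ·) c → ∀ y ∈ c,
      ∃ ub ∈ {y | specLE tm y x}, ∀ z ∈ c, z ≤ ub := by
    intro c hcs hchain y hyc
    haveI : Nonempty c := ⟨⟨y, hyc⟩⟩
    have hw : (⋂ z : c, @closure S tm {z.val}).Nonempty := by
      letI := tm
      apply IsCompact.nonempty_iInter_of_directed_nonempty_isCompact_isClosed
      · intro i j
        rcases hchain.total i.2 j.2 with hij | hij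
        · exact ⟨j, closure_minimal (singleton_subset_iff.2 hij) isClosed_closure,
            subset_rfl⟩
        · exact ⟨i, subset_rfl,
            closure_minimal (singleton_subset_iff.2 hij) isClosed_closure⟩
      · exact fun i => ⟨i.val, subset_closure rfl⟩
      · exact fun i => (univ_compact_m h).of_isClosed_subset isClosed_closure (subset_univ _)
      · exact fun i => isClosed_closure
    obtain ⟨w, hw⟩ := hw
    rw [mem_iInter] at hw
    exact ⟨w, specLE_trans (hw ⟨y, hyc⟩) (hcs hyc), fun z hz => hw ⟨z, hz⟩⟩
  obtain ⟨m, hxm, hms, hmax⟩ :=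
    zorn_le_nonempty₀ {y | specLE tm y x} ih x (specLE_refl tm x)
  refine ⟨m, ?_, hms⟩
  intro z hz
  have hzs : z ∈ {y | specLE tm y x} := specLE_trans hz hms
  exact specLE_antisymm h hz (hmax hzs hz)

lemma closed_min (h : IsAbstractSpectrum tp tm) {F : Set S}
    (hF : @IsClosed S tm F) (hne : F.Nonempty) : ∃ m ∈ MinS tm, m ∈ F := by
  obtain ⟨x, hx⟩ := hne
  obtain ⟨m, hm, hmx⟩ := exists_min h x
  refine ⟨m, hm, ?_⟩
  letI := tm
  exact closure_minimal (singleton_subset_iff.2 hx) hF hmx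

lemma min_compact (h : IsAbstractSpectrum tp tm) : @IsCompact S tm (MinS tm) := by
  letI := tm
  apply isCompact_of_finite_subcover
  intro ι U hU hcov
  have huniv : univ ⊆ ⋃ i, U i := by
    intro z _
    by_contra hz
    obtain ⟨m, hm, hmC⟩ := closed_min h (isClosed_compl_iff.2 (isOpen_iUnion hU))
      ⟨z, hz⟩
    exact hmC (hcov hm)
  obtain ⟨t, ht⟩ := (univ_compact_m h).elim_finite_subcover U hU huniv
  exact ⟨t, (subset_univ _).trans ht⟩

lemma min_dense (h : IsAbstractSpectrum tp tm) : @Dense S tp (MinS tm) := by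
  letI := tp
  rw [dense_iff_inter_open]
  rintro U hU ⟨x, hx⟩
  obtain ⟨m, hm, hmx⟩ := exists_min h x
  obtain ⟨y, hyU, hym⟩ := mem_cl.1 ((spec_flip h m x).1 hmx) U hU hx
  rw [mem_singleton_iff] at hym
  exact ⟨m, hym ▸ hyU, hm⟩

lemma spec_key (h : IsAbstractSpectrum tp tm) {K : Set S} (hK : @IsClosed S tm K)
    {b : S} (hb : b ∈ @closure S tp K) : ∃ k ∈ K, specLE tm k b := by
  by_contra hc
  push_neg at hc
  have hsel : ∀ k : K, ∃ N, N ∈ specL tm tp ∧ k.val ∈ N ∧ b ∉ N := by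
    rintro ⟨k, hk⟩
    have hkb : k ∉ @closure S tm {b} := hc k hk
    rw [mem_cl] at hkb
    push_neg at hkb
    obtain ⟨o, ho, hko, hob⟩ := hkb
    obtain ⟨N, hN, hkN, hNo⟩ := h.base_minus.2 o ho k hko
    exact ⟨N, hN, hkN, fun hbN => (eq_empty_iff_forall_notMem.1 hob) b ⟨hNo hbN, rfl⟩⟩
  choose N hN hkN hbN using hsel
  have hKc : @IsCompact S tm K :=
    (univ_compact_m h).of_isClosed_subset hK (subset_univ K)
  have hcov : K ⊆ ⋃ k : K, N k := fun k hk => mem_iUnion.2 ⟨⟨k, hk⟩, hkN _⟩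
  obtain ⟨t, ht⟩ := hKc.elim_finite_subcover N (fun k => (hN k).1) hcov
  have hVopen : tp.IsOpen (⋂ k ∈ t, (N k)ᶜ) := by
    letI := tp
    exact isOpen_biInter_finset fun k _ => (hN k).2
  have hbV : b ∈ ⋂ k ∈ t, (N k)ᶜ := mem_iInter₂.2 fun k _ => hbN k
  obtain ⟨y, hyV, hyK⟩ := mem_cl.1 hb _ hVopen hbV
  obtain ⟨k, hkt, hyN⟩ := mem_iUnion₂.1 (ht hyK)
  exact (mem_iInter₂.1 hyV k hkt) hyN

lemma spec_sep (h : IsAbstractSpectrum tp tm) {a b : S} (ha : a ∈ MinS tm)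
    (hab : a ∉ @closure S tm {b}) :
    ∃ U V : Set S, tp.IsOpen U ∧ tp.IsOpen V ∧ a ∈ U ∧ b ∈ V ∧ Disjoint U V := by
  rw [mem_cl] at hab
  push_neg at hab
  obtain ⟨o, ho, hao, hob⟩ := hab
  obtain ⟨M, hM, haM, hMo⟩ := h.base_minus.2 o ho a hao
  have hbM : b ∉ M := fun hbM => (eq_empty_iff_forall_notMem.1 hob) b ⟨hMo hbM, rfl⟩
  have hKclosed : @IsClosed S tm Mᶜ := by
    letI := tm; exact isClosed_compl_iff.2 hM.1
  have hacl : a ∉ @closure S tp Mᶜ := by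
    intro hcl
    obtain ⟨k, hk, hka⟩ := spec_key h hKclosed hcl
    exact hk ((ha k hka).symm ▸ haM)
  rw [mem_cl] at hacl
  push_neg at hacl
  obtain ⟨V, hV, haV, hVM⟩ := hacl
  refine ⟨V, Mᶜ, hV, hM.2, haV, hbM, ?_⟩
  rw [Set.disjoint_left]
  intro z hzV hzM
  exact (eq_empty_iff_forall_notMem.1 hVM) z ⟨hzV, hzM⟩

lemma maxS_eq (h : IsAbstractSpectrum tp tm) : MaxS tm = MinS tp := by
  ext m
  constructor
  · intro hm x hx
    exact hm x ((spec_flip h m x).2 hx)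
  · intro hm x hx
    exact hm x ((spec_flip h m x).1 hx)

lemma min_compactSpace (h : IsAbstractSpectrum tp tm) :
    @CompactSpace (MinS tm) (TopologicalSpace.induced (Subtype.val : MinS tm → S) tm) := by
  letI := tm
  exact isCompact_iff_compactSpace.mp (min_compact h)

lemma min_t1 (h : IsAbstractSpectrum tp tm) :
    @T1Space (MinS tm) (TopologicalSpace.induced (Subtype.val : MinS tm → S) tm) := by
  letI := tm
  constructor
  intro x
  have hcl : IsClosed ({x.val} : Set S) := by
    have hsub : closure {x.val} ⊆ {x.val} := fun z hz => x.2 z hz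
    exact isClosed_of_closure_subset hsub
  have : ({x} : Set (MinS tm)) = Subtype.val ⁻¹' {x.val} := by
    ext y
    simp [Subtype.ext_iff]
  rw [this]
  exact hcl.preimage continuous_subtype_val

lemma min_t2 (h : IsAbstractSpectrum tp tm) :
    @T2Space (MinS tm) (TopologicalSpace.induced (Subtype.val : MinS tm → S) tp) := by
  letI := tp
  constructor
  intro x y hxy
  have hne : x.val ≠ y.val := fun e => hxy (Subtype.ext e)
  have hcase : x.val ∉ @closure S tm {y.val} ∨ y.val ∉ @closure S tm {x.val} := by
    by_contra hcc
    push_neg at hcc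
    refine hne ?_
    haveI := t0_minus h
    letI := tm
    exact ((inseparable_iff_mem_closure).2 ⟨hcc.1, hcc.2⟩).eq
  rcases hcase with hx | hy
  · obtain ⟨U, V, hU, hV, haU, hbV, hUV⟩ := spec_sep h x.2 hx
    have hU' : IsOpen U := hU
    have hV' : IsOpen V := hV
    exact ⟨Subtype.val ⁻¹' U, Subtype.val ⁻¹' V, hU'.preimage continuous_subtype_val,
      hV'.preimage continuous_subtype_val, haU, hbV, hUV.preimage _⟩
  · obtain ⟨U, V, hU, hV, haU, hbV, hUV⟩ := spec_sep h y.2 hy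
    have hU' : IsOpen U := hU
    have hV' : IsOpen V := hV
    exact ⟨Subtype.val ⁻¹' V, Subtype.val ⁻¹' U, hV'.preimage continuous_subtype_val,
      hU'.preimage continuous_subtype_val, hbV, haU, hUV.symm.preimage _⟩

end aux

/-- For an abstract spectrum: (a) `Max(S)` with the `T⁺`-subspace topology and `Min(S)`
with the `T⁻`-subspace topology are compact T₁-spaces; (b) `Min(S)` with the
`T⁺`-subspace topology and `Max(S)` with the `T⁻`-subspace topology are Hausdorff;
(c) `Min(S)` is dense in `(S, T⁺)` and `Max(S)` is dense in `(S, T⁻)`. -/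
theorem stmt14 {S : Type*} (tp tm : TopologicalSpace S)
    (h : IsAbstractSpectrum tp tm) :
    (@CompactSpace (MaxS tm) (TopologicalSpace.induced (Subtype.val : MaxS tm → S) tp) ∧
      @T1Space (MaxS tm) (TopologicalSpace.induced (Subtype.val : MaxS tm → S) tp)) ∧
    (@CompactSpace (MinS tm) (TopologicalSpace.induced (Subtype.val : MinS tm → S) tm) ∧
      @T1Space (MinS tm) (TopologicalSpace.induced (Subtype.val : MinS tm → S) tm)) ∧
    @T2Space (MinS tm) (TopologicalSpace.induced (Subtype.val : MinS tm → S) tp) ∧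
    @T2Space (MaxS tm) (TopologicalSpace.induced (Subtype.val : MaxS tm → S) tm) ∧
    @Dense S tp (MinS tm) ∧ @Dense S tm (MaxS tm) := by
  have hs := spec_symm h
  have hmaxeq : MaxS tm = MinS tp := maxS_eq h
  refine ⟨⟨?_, ?_⟩, ⟨min_compactSpace h, min_t1 h⟩, min_t2 h, ?_, min_dense h, ?_⟩
  · rw [hmaxeq]; exact min_compactSpace hs
  · rw [hmaxeq]; exact min_t1 hs
  · rw [hmaxeq]; exact min_t2 hs
  · rw [hmaxeq]; exact min_dense hs
end

section
/- Let X be a preseparative algebra. Then X is a separative algebra (i.e., the relation ≤ is transitive) if and only if X satisfies the Separation principle (Sep): whenever F₀ is a filter, I₀ is an ideal and F₀ ∩ I₀ = ∅, there exist a prime filter F and a prime ideal I with F₀ ⊆ F, I₀ ⊆ I and F ∩ I = ∅. -/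
/-- A carrier for two multivalued binary operations `·` and `+` on `X`. -/
structure PresepOps (X : Type*) where
  mul : X → X → Set X
  add : X → X → Set X

namespace PresepOps

variable {X : Type*} (P : PresepOps X)

/-- The set extension `A·B = ⋃ {a·b : a ∈ A, b ∈ B}`. -/
def smul (A B : Set X) : Set X := ⋃ a ∈ A, ⋃ b ∈ B, P.mul a b

/-- The set extension `A+B = ⋃ {a+b : a ∈ A, b ∈ B}`. -/
def sadd (A B : Set X) : Set X := ⋃ a ∈ A, ⋃ b ∈ B, P.add a b

/-- `(X, ·, +)` is a preseparative algebra: `X` is nonempty, both operations are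
commutative and associative (associativity via the set extensions), and axiom (iii):
if `a ∈ b+x` and `c ∈ d·x` then `(a·d) ∩ (b+c) ≠ ∅`. -/
structure IsPresep : Prop where
  nonempty : Nonempty X
  mul_comm : ∀ a b : X, P.mul a b = P.mul b a
  add_comm : ∀ a b : X, P.add a b = P.add b a
  mul_assoc : ∀ a b c : X, P.smul {a} (P.mul b c) = P.smul (P.mul a b) {c}
  add_assoc : ∀ a b c : X, P.sadd {a} (P.add b c) = P.sadd (P.add a b) {c}
  sep : ∀ a b c d x : X, a ∈ P.add b x → c ∈ P.mul d x →
    (P.mul a d ∩ P.add b c).Nonempty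

/-- A filter: `F·F ⊆ F`. -/
def IsFilter (F : Set X) : Prop := P.smul F F ⊆ F

/-- An ideal: `I+I ⊆ I`. -/
def IsIdeal (I : Set X) : Prop := P.sadd I I ⊆ I

/-- A prime filter: a filter whose complement is an ideal. -/
def IsPrimeFilter (F : Set X) : Prop := P.IsFilter F ∧ P.IsIdeal Fᶜ

/-- A prime ideal: an ideal whose complement is a filter. -/
def IsPrimeIdeal (I : Set X) : Prop := P.IsIdeal I ∧ P.IsFilter Iᶜ

/-- `μ(A)`: the smallest filter containing `A` (the intersection of all filters
containing `A`, which is a filter). -/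
def mu (A : Set X) : Set X := ⋂₀ {F | P.IsFilter F ∧ A ⊆ F}

/-- `α(A)`: the smallest ideal containing `A` (the intersection of all ideals
containing `A`, which is an ideal). -/
def alpha (A : Set X) : Set X := ⋂₀ {I | P.IsIdeal I ∧ A ⊆ I}

/-- `x ≤ y` iff `μ({x}) ∩ α({y}) ≠ ∅`. A preseparative algebra is a separative algebra
iff this relation is transitive. -/
def le (x y : X) : Prop := (P.mu {x} ∩ P.alpha {y}).Nonempty

end PresepOps

namespace PresepOps

variable {X : Type*} {P : PresepOps X}

/-! ### Basic membership lemmas -/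

lemma mem_smul {A B : Set X} {e : X} :
    e ∈ P.smul A B ↔ ∃ a ∈ A, ∃ b ∈ B, e ∈ P.mul a b := by
  simp [PresepOps.smul]

lemma mem_sadd {A B : Set X} {e : X} :
    e ∈ P.sadd A B ↔ ∃ a ∈ A, ∃ b ∈ B, e ∈ P.add a b := by
  simp [PresepOps.sadd]

/-! ### The opposite (dual) algebra -/

/-- The dual algebra, with the roles of `·` and `+` exchanged. -/
def op (P : PresepOps X) : PresepOps X := ⟨P.add, P.mul⟩

lemma IsPresep.op (hP : P.IsPresep) : P.op.IsPresep where
  nonempty := hP.nonempty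
  mul_comm := hP.add_comm
  add_comm := hP.mul_comm
  mul_assoc := hP.add_assoc
  add_assoc := hP.mul_assoc
  sep := by
    intro a b c d x h1 h2
    obtain ⟨e, he1, he2⟩ := hP.sep c d a b x h2 h1
    refine ⟨e, ?_, ?_⟩
    · show e ∈ P.add a d
      rwa [hP.add_comm]
    · show e ∈ P.mul b c
      rwa [hP.mul_comm]

/-! ### Filters, ideals, `μ`, `α` -/

lemma isFilter_mu (P : PresepOps X) (A : Set X) : P.IsFilter (P.mu A) := by
  intro e he
  obtain ⟨a, ha, b, hb, hab⟩ := mem_smul.mp he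
  refine Set.mem_sInter.mpr fun T hT => ?_
  exact hT.1 (mem_smul.mpr ⟨a, Set.mem_sInter.mp ha T hT, b, Set.mem_sInter.mp hb T hT, hab⟩)

lemma mu_subset {T A : Set X} (hT : P.IsFilter T) (hA : A ⊆ T) : P.mu A ⊆ T :=
  Set.sInter_subset_of_mem ⟨hT, hA⟩

lemma subset_mu {A : Set X} : A ⊆ P.mu A :=
  fun _ hx => Set.mem_sInter.mpr fun _ hT => hT.2 hx

lemma mem_mu_self (x : X) : x ∈ P.mu {x} := subset_mu rfl

lemma isIdeal_alpha (P : PresepOps X) (A : Set X) : P.IsIdeal (P.alpha A) :=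
  isFilter_mu P.op A

lemma alpha_subset {T A : Set X} (hT : P.IsIdeal T) (hA : A ⊆ T) : P.alpha A ⊆ T :=
  Set.sInter_subset_of_mem ⟨hT, hA⟩

lemma mem_alpha_self (x : X) : x ∈ P.alpha {x} :=
  mem_mu_self (P := P.op) x

/-! ### Reassociation lemmas -/

lemma mul_reassoc (hP : P.IsPresep) {a b c z e : X} (hz : z ∈ P.mul b c)
    (he : e ∈ P.mul a z) : ∃ w ∈ P.mul a b, e ∈ P.mul w c := by
  have h1 : e ∈ P.smul {a} (P.mul b c) := mem_smul.mpr ⟨a, rfl, z, hz, he⟩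
  rw [hP.mul_assoc] at h1
  obtain ⟨w, hw, c', hc', he'⟩ := mem_smul.mp h1
  rw [Set.mem_singleton_iff] at hc'
  subst hc'
  exact ⟨w, hw, he'⟩

lemma mul_reassoc' (hP : P.IsPresep) {a b c z e : X} (hz : z ∈ P.mul a b)
    (he : e ∈ P.mul z c) : ∃ w ∈ P.mul b c, e ∈ P.mul a w := by
  have h1 : e ∈ P.smul (P.mul a b) {c} := mem_smul.mpr ⟨z, hz, c, rfl, he⟩
  rw [← hP.mul_assoc] at h1
  obtain ⟨a', ha', w, hw, he'⟩ := mem_smul.mp h1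
  rw [Set.mem_singleton_iff] at ha'
  subst ha'
  exact ⟨w, hw, he'⟩

/-! ### Chains of repeated multiplication by a fixed element -/

/-- `PChain P x u n e` : `e` can be obtained from `u` by multiplying by `x`
exactly `n` times. -/
inductive PChain (P : PresepOps X) (x u : X) : ℕ → X → Prop
  | base : PChain P x u 0 u
  | succ {n e' e} : PChain P x u n e' → e ∈ P.mul e' x → PChain P x u (n + 1) e

lemma PChain.base_mul (hP : P.IsPresep) {x u : X} {n : ℕ} {e : X}
    (hch : PChain P x u n e) {z e₂ : X} (h : e₂ ∈ P.mul e z) :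
    ∃ u₂ ∈ P.mul u z, PChain P x u₂ n e₂ := by
  induction hch generalizing e₂ with
  | base => exact ⟨e₂, h, .base⟩
  | succ hch' hm ih =>
    rw [hP.mul_comm] at h
    obtain ⟨w, hw, he₂⟩ := mul_reassoc hP hm h
    rw [hP.mul_comm] at hw
    obtain ⟨u₂, hu₂, chw⟩ := ih hw
    exact ⟨u₂, hu₂, chw.succ he₂⟩

lemma PChain.concat {x u v : X} {m : ℕ} (h1 : PChain P x u m v) :
    ∀ {n e}, PChain P x v n e → ∃ k, PChain P x u k e := by
  intro n e h2
  induction h2 with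
  | base => exact ⟨m, h1⟩
  | succ h2' hm ih =>
    obtain ⟨k, hk⟩ := ih
    exact ⟨k + 1, hk.succ hm⟩

lemma PChain.mem_filter {T : Set X} (hT : P.IsFilter T) {x u : X} (hx : x ∈ T)
    {n : ℕ} {e : X} (hch : PChain P x u n e) (hu : u ∈ T) : e ∈ T := by
  induction hch with
  | base => exact hu
  | succ hch' hm ih => exact hT (mem_smul.mpr ⟨_, ih, x, hx, hm⟩)

lemma chain_mul (hP : P.IsPresep) {x c₂ : X} {n₂ : ℕ} (h2 : PChain P x x n₂ c₂) :
    ∀ {n₁ : ℕ} {c₁ e : X}, PChain P x x n₁ c₁ → e ∈ P.mul c₁ c₂ →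
      ∃ k, PChain P x x k e := by
  induction h2 with
  | base =>
    intro n₁ c₁ e h1 he
    exact ⟨n₁ + 1, h1.succ he⟩
  | succ h2' hm ih =>
    intro n₁ c₁ e h1 he
    obtain ⟨w, hw, he'⟩ := mul_reassoc hP hm he
    obtain ⟨k, hk⟩ := ih h1 hw
    exact ⟨k + 1, hk.succ he'⟩

lemma mem_mu_singleton (hP : P.IsPresep) {x e : X} :
    e ∈ P.mu {x} ↔ ∃ n, PChain P x x n e := by
  constructor
  · intro h
    have hfil : P.IsFilter {e | ∃ n, PChain P x x n e} := by
      intro y hy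
      obtain ⟨a, ⟨n₁, ha⟩, b, ⟨n₂, hb⟩, hab⟩ := mem_smul.mp hy
      exact chain_mul hP hb ha hab
    refine mu_subset hfil ?_ h
    intro y hy
    rw [Set.mem_singleton_iff] at hy
    subst hy
    exact ⟨0, .base⟩
  · rintro ⟨n, hch⟩
    exact hch.mem_filter (isFilter_mu P {x}) (mem_mu_self x) (mem_mu_self x)

lemma mem_alpha_singleton (hP : P.IsPresep) {x e : X} :
    e ∈ P.alpha {x} ↔ ∃ n, PChain P.op x x n e :=
  mem_mu_singleton (P := P.op) hP.op

/-! ### The key combinatorial lemmas -/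

/-- If `f₀ ∈ S`, `i₀ ∈ T`, `f₀ ∈ i₀ + v`, then no element of `T` can be reached from an
element of `S` by repeatedly multiplying by `v`, unless `S ∩ T ≠ ∅`. -/
lemma lem0 (hP : P.IsPresep) {S T : Set X} (hS : P.IsFilter S) (hT : P.IsIdeal T)
    {fs is v : X} (hfs : fs ∈ S) (his : is ∈ T) (hfv : fs ∈ P.add is v) :
    ∀ {n : ℕ} {u i : X}, u ∈ S → PChain P v u n i → i ∈ T → (S ∩ T).Nonempty := by
  intro n
  induction n with
  | zero =>
    intro u i hu hch hi
    cases hch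
    exact ⟨u, hu, hi⟩
  | succ n ih =>
    intro u i hu hch hi
    cases hch with
    | succ hch' hm =>
      obtain ⟨e, hem, hea⟩ := hP.sep fs is i _ v hfv hm
      have heT : e ∈ T := hT (mem_sadd.mpr ⟨is, his, i, hi, hea⟩)
      rw [hP.mul_comm] at hem
      obtain ⟨u₂, hu₂m, hch₂⟩ := hch'.base_mul hP hem
      exact ih (hS (mem_smul.mpr ⟨u, hu, fs, hfs, hu₂m⟩)) hch₂ heT

/-- Key lemma: an element that is simultaneously reachable from an element of `F` by
multiplying by `q` and from an element of `I` by adding `p` leads to `F ∩ I ≠ ∅`. -/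
lemma lem3 (hP : P.IsPresep) {F I : Set X} (hF : P.IsFilter F) (hI : P.IsIdeal I)
    {f i₀ q i f₀ p : X}
    (hfF : f ∈ F) (hi₀ : i₀ ∈ I) (hfq : f ∈ P.add i₀ q)
    (hiI : i ∈ I) (hf₀ : f₀ ∈ F) (hip : i ∈ P.mul f₀ p) :
    ∀ (r : ℕ) {u₀ w₀ : X} {s : ℕ} {z : X}, u₀ ∈ F → w₀ ∈ I →
      PChain P q u₀ s z → PChain P.op p w₀ r z → (F ∩ I).Nonempty := by
  intro r
  induction r with
  | zero =>
    intro u₀ w₀ s z hu₀ hw₀ chq chp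
    cases chp
    exact lem0 hP hF hI hfF hi₀ hfq hu₀ chq hw₀
  | succ r ih =>
    intro u₀ w₀ s z hu₀ hw₀ chq chp
    cases chp with
    | succ chp' hzp =>
      obtain ⟨e, he1, he2⟩ := hP.sep z _ i f₀ p hzp hip
      obtain ⟨u₁, hu₁, chq₂⟩ := chq.base_mul hP he1
      obtain ⟨w₁, hw₁, chp₂⟩ := chp'.base_mul hP.op he2
      exact ih (hF (mem_smul.mpr ⟨u₀, hu₀, f₀, hf₀, hu₁⟩))
        (hI (mem_sadd.mpr ⟨w₀, hw₀, i, hiI, hw₁⟩)) chq₂ chp₂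

/-- The central contradiction lemma for the maximality argument. -/
lemma contra (hP : P.IsPresep) (htr : Transitive P.le) {F I : Set X}
    (hF : P.IsFilter F) (hI : P.IsIdeal I) {c f i : X}
    (hfF : f ∈ F) (hiI : i ∈ I)
    (hi : i ∈ P.mu {c} ∨ ∃ f₀ ∈ F, ∃ p ∈ P.mu {c}, i ∈ P.mul f₀ p)
    (hf : f ∈ P.alpha {c} ∨ ∃ i₀ ∈ I, ∃ q ∈ P.alpha {c}, f ∈ P.add i₀ q) :
    (F ∩ I).Nonempty := by
  rcases hi with hiM | ⟨f₀, hf₀F, p, hp, hip⟩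
  · rcases hf with hfA | ⟨i₀, hi₀I, q, hq, hfq⟩
    · -- both pure
      obtain ⟨t, ht1, ht2⟩ := htr ⟨f, mem_mu_self f, hfA⟩ ⟨i, hiM, mem_alpha_self i⟩
      exact ⟨t, mu_subset hF (Set.singleton_subset_iff.mpr hfF) ht1,
        alpha_subset hI (Set.singleton_subset_iff.mpr hiI) ht2⟩
    · -- i pure, f mixed
      obtain ⟨t, htq, hti⟩ := htr ⟨q, mem_mu_self q, hq⟩ ⟨i, hiM, mem_alpha_self i⟩
      have htI : t ∈ I := alpha_subset hI (Set.singleton_subset_iff.mpr hiI) hti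
      obtain ⟨s, chq⟩ := (mem_mu_singleton hP).mp htq
      cases chq with
      | base => exact ⟨f, hfF, hI (mem_sadd.mpr ⟨i₀, hi₀I, q, htI, hfq⟩)⟩
      | succ chq' hmul =>
        obtain ⟨z, hz1, hz2⟩ := hP.sep f i₀ t _ q hfq hmul
        have hzI : z ∈ I := hI (mem_sadd.mpr ⟨i₀, hi₀I, t, htI, hz2⟩)
        rw [hP.mul_comm] at hz1
        obtain ⟨u₁, hu₁, chz⟩ := chq'.base_mul hP hz1
        rw [hP.mul_comm] at hu₁
        obtain ⟨k, chfz⟩ := PChain.concat (PChain.succ .base hu₁) chz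
        exact lem0 hP hF hI hfF hi₀I hfq hfF chfz hzI
  · rcases hf with hfA | ⟨i₀, hi₀I, q, hq, hfq⟩
    · -- i mixed, f pure
      obtain ⟨t, htf, htp⟩ := htr ⟨f, mem_mu_self f, hfA⟩ ⟨p, hp, mem_alpha_self p⟩
      have htF : t ∈ F := mu_subset hF (Set.singleton_subset_iff.mpr hfF) htf
      obtain ⟨r, chp⟩ := (mem_alpha_singleton hP).mp htp
      cases chp with
      | base => exact ⟨i, hF (mem_smul.mpr ⟨f₀, hf₀F, p, htF, hip⟩), hiI⟩
      | succ chp' hadd =>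
        obtain ⟨z, hz1, hz2⟩ := hP.sep t _ i f₀ p hadd hip
        have hzF : z ∈ F := hF (mem_smul.mpr ⟨t, htF, f₀, hf₀F, hz1⟩)
        obtain ⟨w₁, hw₁, chz⟩ := chp'.base_mul hP.op hz2
        have hw₁' : w₁ ∈ P.add i p := by rw [hP.add_comm]; exact hw₁
        obtain ⟨k, chz'⟩ := PChain.concat (PChain.succ .base hw₁') chz
        obtain ⟨y0, hyI, hyF⟩ := lem0 hP.op hI hF hiI hf₀F hip hiI chz' hzF
        exact ⟨y0, hyF, hyI⟩
    · -- both mixed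
      obtain ⟨t, htq, htp⟩ := htr ⟨q, mem_mu_self q, hq⟩ ⟨p, hp, mem_alpha_self p⟩
      obtain ⟨s, chq⟩ := (mem_mu_singleton hP).mp htq
      obtain ⟨r, chpfull⟩ := (mem_alpha_singleton hP).mp htp
      cases chq with
      | base =>
        -- t = q
        have hfq' : f ∈ P.add q i₀ := by rw [hP.add_comm]; exact hfq
        obtain ⟨w₁, hw₁, chf⟩ := chpfull.base_mul hP.op hfq'
        have hw₁' : w₁ ∈ P.add i₀ p := by rw [hP.add_comm]; exact hw₁
        obtain ⟨k, chf'⟩ := PChain.concat (PChain.succ .base hw₁') chf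
        obtain ⟨y0, hyI, hyF⟩ := lem0 hP.op hI hF hiI hf₀F hip hi₀I chf' hfF
        exact ⟨y0, hyF, hyI⟩
      | succ chq' hmulq =>
        cases chpfull with
        | base =>
          -- t = p
          have hip' : i ∈ P.mul p f₀ := by rw [hP.mul_comm]; exact hip
          obtain ⟨u₂, hu₂, chi⟩ := (chq'.succ hmulq).base_mul hP hip'
          have hu₂' : u₂ ∈ P.mul f₀ q := by rw [hP.mul_comm]; exact hu₂
          obtain ⟨k, chi'⟩ := PChain.concat (PChain.succ .base hu₂') chi
          exact lem0 hP hF hI hfF hi₀I hfq hf₀F chi' hiI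
        | succ chp' haddp =>
          obtain ⟨z, hz1, hz2⟩ := hP.sep f i₀ t _ q hfq hmulq
          rw [hP.mul_comm] at hz1
          obtain ⟨u₁, hu₁, chzq⟩ := chq'.base_mul hP hz1
          have hu₁' : u₁ ∈ P.mul f q := by rw [hP.mul_comm]; exact hu₁
          obtain ⟨k₁, chzq'⟩ := PChain.concat (PChain.succ .base hu₁') chzq
          have hz2' : z ∈ P.add t i₀ := by rw [hP.add_comm]; exact hz2
          obtain ⟨w₁, hw₁, chzp⟩ := (chp'.succ haddp).base_mul hP.op hz2'
          have hw₁' : w₁ ∈ P.add i₀ p := by rw [hP.add_comm]; exact hw₁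
          obtain ⟨k₂, chzp'⟩ := PChain.concat (PChain.succ .base hw₁') chzp
          exact lem3 hP hF hI hfF hi₀I hfq hiI hf₀F hip _ hfF hi₀I chzq' chzp'

/-- The filter generated by `F ∪ {c}` is contained in `F ∪ μ{c} ∪ F·μ{c}`. -/
lemma isFilter_extend (hP : P.IsPresep) {F : Set X} (hF : P.IsFilter F) (c : X) :
    P.IsFilter (F ∪ P.mu {c} ∪ P.smul F (P.mu {c})) := by
  have hM : P.IsFilter (P.mu {c}) := isFilter_mu P {c}
  have swap : ∀ {a b e : X}, e ∈ P.mul a b → e ∈ P.mul b a := by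
    intro a b e h
    rw [hP.mul_comm]
    exact h
  intro e he
  obtain ⟨a, ha, b, hb, hab⟩ := mem_smul.mp he
  rcases ha with (haF | haM) | haFM
  · rcases hb with (hbF | hbM) | hbFM
    · exact Or.inl (Or.inl (hF (mem_smul.mpr ⟨a, haF, b, hbF, hab⟩)))
    · exact Or.inr (mem_smul.mpr ⟨a, haF, b, hbM, hab⟩)
    · obtain ⟨f₂, hf₂, m₂, hm₂, hb'⟩ := mem_smul.mp hbFM
      obtain ⟨w, hw, he'⟩ := mul_reassoc hP hb' hab
      exact Or.inr (mem_smul.mpr ⟨w, hF (mem_smul.mpr ⟨a, haF, f₂, hf₂, hw⟩), m₂, hm₂, he'⟩)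
  · rcases hb with (hbF | hbM) | hbFM
    · exact Or.inr (mem_smul.mpr ⟨b, hbF, a, haM, swap hab⟩)
    · exact Or.inl (Or.inr (hM (mem_smul.mpr ⟨a, haM, b, hbM, hab⟩)))
    · obtain ⟨f₂, hf₂, m₂, hm₂, hb'⟩ := mem_smul.mp hbFM
      obtain ⟨w, hw, he'⟩ := mul_reassoc hP hb' hab
      obtain ⟨v, hv, he''⟩ := mul_reassoc' hP (swap hw) he'
      exact Or.inr (mem_smul.mpr ⟨f₂, hf₂, v, hM (mem_smul.mpr ⟨a, haM, m₂, hm₂, hv⟩), he''⟩)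
  · obtain ⟨f₁, hf₁, m₁, hm₁, ha'⟩ := mem_smul.mp haFM
    rcases hb with (hbF | hbM) | hbFM
    · obtain ⟨w, hw, he'⟩ := mul_reassoc hP ha' (swap hab)
      exact Or.inr (mem_smul.mpr ⟨w, hF (mem_smul.mpr ⟨b, hbF, f₁, hf₁, hw⟩), m₁, hm₁, he'⟩)
    · obtain ⟨w, hw, he'⟩ := mul_reassoc hP ha' (swap hab)
      obtain ⟨v, hv, he''⟩ := mul_reassoc' hP (swap hw) he'
      exact Or.inr (mem_smul.mpr ⟨f₁, hf₁, v, hM (mem_smul.mpr ⟨b, hbM, m₁, hm₁, hv⟩), he''⟩)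
    · obtain ⟨f₂, hf₂, m₂, hm₂, hb'⟩ := mem_smul.mp hbFM
      obtain ⟨w, hw, he1⟩ := mul_reassoc' hP ha' hab
      obtain ⟨v, hv, hw2⟩ := mul_reassoc hP hb' hw
      obtain ⟨s, hs, hw3⟩ := mul_reassoc' hP (swap hv) hw2
      obtain ⟨w₂, hw₂, he2⟩ := mul_reassoc hP hw3 he1
      exact Or.inr (mem_smul.mpr ⟨w₂, hF (mem_smul.mpr ⟨f₁, hf₁, f₂, hf₂, hw₂⟩), s,
        hM (mem_smul.mpr ⟨m₁, hm₁, m₂, hm₂, hs⟩), he2⟩)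

end PresepOps

open PresepOps in
/-- A preseparative algebra is separative (the relation `≤` is transitive) iff it
satisfies the Separation principle (Sep). -/
theorem stmt19 {X : Type*} (P : PresepOps X) (hP : P.IsPresep) :
    Transitive P.le ↔
      ∀ F₀ I₀ : Set X, P.IsFilter F₀ → P.IsIdeal I₀ → F₀ ∩ I₀ = ∅ →
        ∃ F I : Set X, P.IsPrimeFilter F ∧ P.IsPrimeIdeal I ∧
          F₀ ⊆ F ∧ I₀ ⊆ I ∧ F ∩ I = ∅ := by
  constructor
  · -- transitivity implies Sep
    intro htr F₀ I₀ hF₀ hI₀ hdisj₀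
    classical
    set S : Set (Set X × Set X) :=
      {FI | P.IsFilter FI.1 ∧ P.IsIdeal FI.2 ∧ F₀ ⊆ FI.1 ∧ I₀ ⊆ FI.2 ∧ FI.1 ∩ FI.2 = ∅}
      with hSdef
    have hzorn : ∃ m, (F₀, I₀) ≤ m ∧ Maximal (· ∈ S) m := by
      refine zorn_le_nonempty₀ S ?_ (F₀, I₀) ⟨hF₀, hI₀, subset_rfl, subset_rfl, hdisj₀⟩
      intro ch hchS hchain y hy
      refine ⟨(⋃ pr ∈ ch, pr.1, ⋃ pr ∈ ch, pr.2), ⟨?_, ?_, ?_, ?_, ?_⟩, ?_⟩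
      · intro e he
        obtain ⟨a, ha, b, hb, hab⟩ := mem_smul.mp he
        simp only [Set.mem_iUnion] at ha hb ⊢
        obtain ⟨pa, hpa, hapa⟩ := ha
        obtain ⟨pb, hpb, hbpb⟩ := hb
        rcases hchain.total hpa hpb with hpq | hpq
        · exact ⟨pb, hpb, (hchS hpb).1 (mem_smul.mpr ⟨a, hpq.1 hapa, b, hbpb, hab⟩)⟩
        · exact ⟨pa, hpa, (hchS hpa).1 (mem_smul.mpr ⟨a, hapa, b, hpq.1 hbpb, hab⟩)⟩
      · intro e he
        obtain ⟨a, ha, b, hb, hab⟩ := mem_sadd.mp he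
        simp only [Set.mem_iUnion] at ha hb ⊢
        obtain ⟨pa, hpa, hapa⟩ := ha
        obtain ⟨pb, hpb, hbpb⟩ := hb
        rcases hchain.total hpa hpb with hpq | hpq
        · exact ⟨pb, hpb, (hchS hpb).2.1 (mem_sadd.mpr ⟨a, hpq.2 hapa, b, hbpb, hab⟩)⟩
        · exact ⟨pa, hpa, (hchS hpa).2.1 (mem_sadd.mpr ⟨a, hapa, b, hpq.2 hbpb, hab⟩)⟩
      · intro t ht
        exact Set.mem_iUnion₂.mpr ⟨y, hy, (hchS hy).2.2.1 ht⟩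
      · intro t ht
        exact Set.mem_iUnion₂.mpr ⟨y, hy, (hchS hy).2.2.2.1 ht⟩
      · rw [Set.eq_empty_iff_forall_notMem]
        rintro t ⟨ht1, ht2⟩
        simp only [Set.mem_iUnion] at ht1 ht2
        obtain ⟨pa, hpa, h1⟩ := ht1
        obtain ⟨pb, hpb, h2⟩ := ht2
        rcases hchain.total hpa hpb with hpq | hpq
        · exact Set.eq_empty_iff_forall_notMem.mp (hchS hpb).2.2.2.2 t ⟨hpq.1 h1, h2⟩
        · exact Set.eq_empty_iff_forall_notMem.mp (hchS hpa).2.2.2.2 t ⟨h1, hpq.2 h2⟩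
      · intro z hz
        exact ⟨fun t ht => Set.mem_iUnion₂.mpr ⟨z, hz, ht⟩,
          fun t ht => Set.mem_iUnion₂.mpr ⟨z, hz, ht⟩⟩
    obtain ⟨m, _, hmmem, hmax⟩ := hzorn
    obtain ⟨hFfil, hIid, hF₀F, hI₀I, hFI⟩ := hmmem
    have hdisj := Set.eq_empty_iff_forall_notMem.mp hFI
    -- maximal pair covers X
    have hcover : ∀ x : X, x ∈ m.1 ∪ m.2 := by
      intro c0
      by_contra hc0
      simp only [Set.mem_union, not_or] at hc0
      obtain ⟨hc0F, hc0I⟩ := hc0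
      -- extend the filter side
      have hGfil : P.IsFilter (m.1 ∪ P.mu {c0} ∪ P.smul m.1 (P.mu {c0})) :=
        isFilter_extend hP hFfil c0
      have hGsub : m.1 ⊆ m.1 ∪ P.mu {c0} ∪ P.smul m.1 (P.mu {c0}) :=
        fun t ht => Or.inl (Or.inl ht)
      have hGI : ((m.1 ∪ P.mu {c0} ∪ P.smul m.1 (P.mu {c0})) ∩ m.2).Nonempty := by
        rcases Set.eq_empty_or_nonempty
          ((m.1 ∪ P.mu {c0} ∪ P.smul m.1 (P.mu {c0})) ∩ m.2) with hemp | hne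
        · exfalso
          have hmem' : ((m.1 ∪ P.mu {c0} ∪ P.smul m.1 (P.mu {c0})), m.2) ∈ S :=
            ⟨hGfil, hIid, fun t ht => hGsub (hF₀F ht), hI₀I, hemp⟩
          have hge := hmax hmem' ⟨hGsub, subset_rfl⟩
          exact hc0F (hge.1 (Or.inl (Or.inr (mem_mu_self c0))))
        · exact hne
      obtain ⟨i, hiG, hiI⟩ := hGI
      -- extend the ideal side
      have hHid : P.IsIdeal (m.2 ∪ P.alpha {c0} ∪ P.sadd m.2 (P.alpha {c0})) :=
        isFilter_extend (P := P.op) hP.op hIid c0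
      have hHsub : m.2 ⊆ m.2 ∪ P.alpha {c0} ∪ P.sadd m.2 (P.alpha {c0}) :=
        fun t ht => Or.inl (Or.inl ht)
      have hHF : ((m.2 ∪ P.alpha {c0} ∪ P.sadd m.2 (P.alpha {c0})) ∩ m.1).Nonempty := by
        rcases Set.eq_empty_or_nonempty
          ((m.2 ∪ P.alpha {c0} ∪ P.sadd m.2 (P.alpha {c0})) ∩ m.1) with hemp | hne
        · exfalso
          have hmem' : (m.1, m.2 ∪ P.alpha {c0} ∪ P.sadd m.2 (P.alpha {c0})) ∈ S :=
            ⟨hFfil, hHid, hF₀F, fun t ht => hHsub (hI₀I ht), by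
              rw [Set.eq_empty_iff_forall_notMem]
              rintro t ⟨h1, h2⟩
              exact Set.eq_empty_iff_forall_notMem.mp hemp t ⟨h2, h1⟩⟩
          have hge := hmax hmem' ⟨subset_rfl, hHsub⟩
          exact hc0I (hge.2 (Or.inl (Or.inr (mem_alpha_self c0))))
        · exact hne
      obtain ⟨f, hfH, hfF⟩ := hHF
      -- analyse the memberships
      have hidata : i ∈ P.mu {c0} ∨ ∃ f₀ ∈ m.1, ∃ p ∈ P.mu {c0}, i ∈ P.mul f₀ p := by
        rcases hiG with (hiF | hiM) | hiFM
        · exact absurd ⟨hiF, hiI⟩ (hdisj i)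
        · exact Or.inl hiM
        · exact Or.inr (mem_smul.mp hiFM)
      have hfdata : f ∈ P.alpha {c0} ∨ ∃ i₀ ∈ m.2, ∃ q ∈ P.alpha {c0}, f ∈ P.add i₀ q := by
        rcases hfH with (hfI | hfA) | hfIA
        · exact absurd ⟨hfF, hfI⟩ (hdisj f)
        · exact Or.inl hfA
        · exact Or.inr (mem_sadd.mp hfIA)
      obtain ⟨t, ht1, ht2⟩ := contra hP htr hFfil hIid hfF hiI hidata hfdata
      exact hdisj t ⟨ht1, ht2⟩
    have hIcomp : m.2 = m.1ᶜ := by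
      ext t
      constructor
      · intro ht hf
        exact hdisj t ⟨hf, ht⟩
      · intro ht
        rcases hcover t with h | h
        · exact absurd h ht
        · exact h
    refine ⟨m.1, m.2, ⟨hFfil, ?_⟩, ⟨hIid, ?_⟩, hF₀F, hI₀I, hFI⟩
    · rw [← hIcomp]
      exact hIid
    · rw [hIcomp, compl_compl]
      exact hFfil
  · -- Sep implies transitivity
    intro hsep x y z hxy hyz
    by_contra hxz
    obtain ⟨F, I, ⟨hFf, hFc⟩, ⟨hIi, hIc⟩, hFsub, hIsub, hFI⟩ :=
      hsep (P.mu {x}) (P.alpha {z}) (isFilter_mu P _) (isIdeal_alpha P _)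
        (Set.not_nonempty_iff_eq_empty.mp hxz)
    obtain ⟨t, ht1, ht2⟩ := hxy
    obtain ⟨s, hs1, hs2⟩ := hyz
    have hdisj := Set.eq_empty_iff_forall_notMem.mp hFI
    have hyF : y ∈ F := by
      by_contra hyF
      have hsubc : P.alpha {y} ⊆ Fᶜ := alpha_subset hFc (Set.singleton_subset_iff.mpr hyF)
      exact hsubc ht2 (hFsub ht1)
    have hyIc : y ∈ Iᶜ := fun hyI => hdisj y ⟨hyF, hyI⟩
    have hsubc : P.mu {y} ⊆ Iᶜ := mu_subset hIc (Set.singleton_subset_iff.mpr hyIc)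
    exact hsubc hs1 (hIsub hs2)
end
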